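/- arXiv:1106.5154 — 2 statements merged into one kernel-verified Lean document; each statement's English description precedes it below -/
import Mathlib

section
/- Let A be a Noetherian ring, M a finitely generated A-module, I an ideal of A, and N a submodule of M. Then there exists a natural number μ such that for all integers r ≥ 0, I^(μ+r)·M ∩ N = I^r·(I^μ·M ∩ N). -/
/-- **Artin–Rees lemma.** For a Noetherian commutative ring `A`, a finitely generated
`A`-module `M`, an ideal `I ⊆ A` and a submodule `N ≤ M`, there is a `μ` such that
`I^(μ+r) M ⊓ N = I^r (I^μ M ⊓ N)` for all `r ≥ 0`. -/
theorem artin_rees {A : Type*} [CommRing A] [IsNoetherianRing A]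
    {M : Type*} [AddCommGroup M] [Module A M] [Module.Finite A M]
    (I : Ideal A) (N : Submodule A M) :
    ∃ μ : ℕ, ∀ r : ℕ,
      (I ^ (μ + r) • (⊤ : Submodule A M)) ⊓ N =
        I ^ r • ((I ^ μ • (⊤ : Submodule A M)) ⊓ N) := by
  obtain ⟨μ, hμ⟩ := I.exists_pow_inf_eq_pow_smul N
  exact ⟨μ, fun r => by rw [hμ (μ + r) (Nat.le_add_right μ r), Nat.add_sub_cancel_left]⟩
end

section
/- Let (E¹, f¹), ..., (Eʳ, fʳ) be complexes of modules (each of the form ⋯ → Eᵏ₂ → Eᵏ₁ → Eᵏ₀ → 0). Define H₀ = E¹₀ ⊗ ⋯ ⊗ Eʳ₀ and, for k ≥ 1, H_k = ⊕_{α₁+⋯+α_r = k−1} E¹_{1+α₁} ⊗ ⋯ ⊗ Eʳ_{1+α_r}, with h₁ = f¹₁ ⊗ ⋯ ⊗ fʳ₁ (the induced map H₁ = E¹₁⊗⋯⊗Eʳ₁ → H₀) and for k ≥ 2, h_k the sum over 1 ≤ s ≤ r and j ≥ 2 of the maps induced by fˢ_j (with Koszul signs). Then (H, h) is a complex, i.e.,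 h_k ∘ h_{k+1} = 0 for all k ≥ 1. -/
open scoped TensorProduct DirectSum

namespace Diamond

variable (R : Type*) [CommRing R] {r : ℕ}
variable (E : Fin r → ℕ → Type*) [∀ k j, AddCommGroup (E k j)] [∀ k j, Module R (E k j)]

/-- The tensor product `E¹_{α 1} ⊗ ⋯ ⊗ Eʳ_{α r}`. -/
abbrev T (α : Fin r → ℕ) : Type _ := ⨂[R] k, E k (α k)

/-- Transport along an equality of indices. -/
def castE (k : Fin r) {i j : ℕ} (h : i = j) : E k i ≃ₗ[R] E k j := by
  subst h; exact LinearEquiv.refl R (E k i)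

variable (f : ∀ (k : Fin r) (j : ℕ), E k (j + 1) →ₗ[R] E k j)

/-- The map on `T α` induced by the differential `fˢ` (without the Koszul sign),
lowering the `s`-th index from `j + 1` to `j`. -/
noncomputable def diffComp (s : Fin r) (j : ℕ) (α : Fin r → ℕ) (h : α s = j + 1) :
    T R E α →ₗ[R] T R E (Function.update α s j) :=
  PiTensorProduct.map fun k => by
    by_cases hk : k = s
    · subst hk
      exact (castE R E k (show j = Function.update α k j k by simp)).toLinearMap ∘ₗ
        (f k j) ∘ₗ (castE R E k h).toLinearMap
    · exact (castE R E k (show α k = Function.update α s j k by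
        simp [Function.update_of_ne hk])).toLinearMap

/-- The Koszul sign `(−1)^{deg (e₁ ⊗ ⋯ ⊗ e_{s−1})} = (−1)^{∑_{k<s} α k}`. -/
def koszulSign (s : Fin r) (α : Fin r → ℕ) : ℤ :=
  (-1) ^ (∑ k ∈ Finset.univ.filter (fun k => k < s), α k)

/-- The total graded module `⊕_α E¹_{α 1} ⊗ ⋯ ⊗ Eʳ_{α r}`. -/
abbrev G : Type _ := ⨁ α : Fin r → ℕ, T R E α

open Classical in
/-- The component of the diamond differential `h` on `T α`: on `α = (1,…,1)` it is the
composition `h₁ = fʳ₁ ⋯ f¹₁`, i.e. `f¹₁ ⊗ ⋯ ⊗ fʳ₁`, and on the other components it is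
`∑_{s, α s ≥ 2} fˢ_{α s}` with Koszul signs. -/
noncomputable def hComp (α : Fin r → ℕ) : T R E α →ₗ[R] G R E := by
  by_cases h1 : α = fun _ => 1
  · subst h1
    exact (DirectSum.lof R _ (fun β => T R E β) fun _ => 0) ∘ₗ
      (PiTensorProduct.map fun k => f k 0)
  · exact ∑ s : Fin r, if h : 2 ≤ α s then
      (DirectSum.lof R _ (fun β => T R E β) (Function.update α s (α s - 1))) ∘ₗ
        (koszulSign s α • diffComp R E f s (α s - 1) α (by omega))
    else 0

/-- The diamond differential on the total graded module. -/
noncomputable def hGlobal : G R E →ₗ[R] G R E :=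
  DirectSum.toModule R _ (G R E) (hComp R E f)

/-- Admissible multidegrees for `H_k`: `H₀ = E¹₀ ⊗ ⋯ ⊗ Eʳ₀` and, for `k ≥ 1`,
`H_k = ⊕_{α₁ + ⋯ + α_r = k − 1} E¹_{1+α₁} ⊗ ⋯ ⊗ Eʳ_{1+α_r}`. -/
def Adm : ℕ → (Fin r → ℕ) → Prop
  | 0, α => α = fun _ => 0
  | k + 1, α => (∀ i, 1 ≤ α i) ∧ ∑ i, α i = k + r

/-- The `k`-th term of the diamond product complex. -/
abbrev H (k : ℕ) : Type _ := ⨁ β : {β : Fin r → ℕ // Adm k β}, T R E β.1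

/-- Inclusion `H_k → G`. -/
noncomputable def incl (k : ℕ) : H R E k →ₗ[R] G R E :=
  DirectSum.toModule R _ (G R E) fun β => DirectSum.lof R _ (fun α => T R E α) β.1

open Classical in
/-- Projection `G → H_k`. -/
noncomputable def proj (k : ℕ) : G R E →ₗ[R] H R E k :=
  DirectSum.toModule R _ (H R E k) fun α =>
    if h : Adm k α then DirectSum.lof R _ (fun β : {β : Fin r → ℕ // Adm k β} => T R E β.1) ⟨α, h⟩
    else 0

/-- The diamond differential `h_{k+1} : H_{k+1} → H_k`. -/
noncomputable def hMap (k : ℕ) : H R E (k + 1) →ₗ[R] H R E k :=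
  proj R E k ∘ₗ hGlobal R E f ∘ₗ incl R E (k + 1)

/-! On the total module `G`, the differential is `h₁ + ∑ₛ δₛ`, where `h₁ = f¹₁ ⊗ ⋯ ⊗ fʳ₁` lives
on the component `(1,…,1)` and `δₛ` is the signed map induced by `fˢ_j` with `j ≥ 2`. Each `δₛ`
squares to zero since `fˢ ∘ fˢ = 0`; for `s ≠ t`, `δₛ` and `δₜ` act on different tensor factors
and their Koszul signs pick up exactly one extra `-1` when the order is swapped, so they
anticommute; and `h₁ ∘ δₛ = 0`, as it again contains `fˢ₁ ∘ fˢ₂`. Hence the square of the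
differential is `h ∘ h₁`, and `h₁` vanishes on `H_{k+2}`, none of whose multidegrees is `(1,…,1)`.
Since `h` maps `H_{k+2}` into `H_{k+1}`, the truncations to `H` do not interfere. -/

open Function (update)

theorem sum_mul_sum_self_eq_zero {ι A : Type*} [NonUnitalNonAssocSemiring A] (s : Finset ι)
    (d : ι → A) (hsq : ∀ i ∈ s, d i * d i = 0)
    (hanti : ∀ i ∈ s, ∀ j ∈ s, i ≠ j → d i * d j + d j * d i = 0) :
    (∑ i ∈ s, d i) * ∑ i ∈ s, d i = 0 := by
  rw [Finset.sum_mul_sum, ← Finset.sum_product']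
  refine Finset.sum_involution (fun p _ => p.swap) (fun p hp => ?_) (fun p hp hne => ?_)
    (fun p hp => Finset.mem_product.2 (Finset.mem_product.1 hp).symm) (fun p _ => p.swap_swap)
  · obtain ⟨hi, hj⟩ := Finset.mem_product.1 hp
    by_cases hij : p.1 = p.2
    · simp [← hij, hsq _ hi]
    · exact hanti _ hi _ hj hij
  · rintro heq
    obtain ⟨hi, -⟩ := Finset.mem_product.1 hp
    have hij : p.2 = p.1 := congrArg Prod.fst heq
    exact hne (by rw [hij]; exact hsq _ hi)

section Transport

variable {R E}

@[simp] lemma castE_castE {k : Fin r} {i j l : ℕ} (h₁ : i = j) (h₂ : j = l) (x : E k i) :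
    castE R E k h₂ (castE R E k h₁ x) = castE R E k (h₁.trans h₂) x := by
  subst h₁ h₂; rfl

@[simp] lemma castE_rfl {k : Fin r} {i : ℕ} (h : i = i) (x : E k i) : castE R E k h x = x := rfl

lemma lof_tprod_congr {γ γ' : Fin r → ℕ} (h : γ = γ') {x : ∀ k, E k (γ k)}
    {y : ∀ k, E k (γ' k)} (hxy : ∀ k, castE R E k (congrFun h k) (x k) = y k) :
    DirectSum.lof R _ (fun β => T R E β) γ (PiTensorProduct.tprod R x) =
      DirectSum.lof R _ (fun β => T R E β) γ' (PiTensorProduct.tprod R y) := by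
  subst h
  congr 2
  exact funext hxy

lemma linearMap_ext_lof_tprod {M : Type*} [AddCommGroup M] [Module R M] {φ ψ : G R E →ₗ[R] M}
    (h : ∀ α (x : ∀ k, E k (α k)),
      φ (DirectSum.lof R _ _ α (PiTensorProduct.tprod R x)) =
        ψ (DirectSum.lof R _ _ α (PiTensorProduct.tprod R x))) :
    φ = ψ :=
  DirectSum.linearMap_ext R fun α => PiTensorProduct.ext (MultilinearMap.ext (h α))

end Transport

def diffCoords (s : Fin r) (j : ℕ) (α : Fin r → ℕ) (h : α s = j + 1)
    (x : ∀ k, E k (α k)) (k : Fin r) : E k (update α s j k) :=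
  if hk : k = s then
    castE R E k (by rw [hk, Function.update_self])
      (f k j (castE R E k (by rw [hk, h]) (x k)))
  else castE R E k (by rw [Function.update_of_ne hk]) (x k)

section DiffCoords

variable {R E f}

lemma diffComp_tprod (s : Fin r) (j : ℕ) (α : Fin r → ℕ) (h : α s = j + 1)
    (x : ∀ k, E k (α k)) :
    diffComp R E f s j α h (PiTensorProduct.tprod R x) =
      PiTensorProduct.tprod R (diffCoords R E f s j α h x) := by
  rw [diffComp, PiTensorProduct.map_tprod]
  congr 1
  funext k
  by_cases hk : k = s
  · subst hk
    simp [diffCoords]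
  · simp [diffCoords, hk]

lemma lof_tprod_diffCoords_congr {α : Fin r → ℕ} (s : Fin r) {j j' : ℕ} (hj : j = j')
    (h : α s = j + 1) (x : ∀ k, E k (α k)) :
    DirectSum.lof R _ (fun γ => T R E γ) (update α s j)
        (PiTensorProduct.tprod R (diffCoords R E f s j α h x)) =
      DirectSum.lof R _ (fun γ => T R E γ) (update α s j')
        (PiTensorProduct.tprod R (diffCoords R E f s j' α (hj ▸ h) x)) := by
  subst hj; rfl

lemma tprod_diffCoords_diffCoords_self_eq_zero (hf : ∀ k j, (f k j).comp (f k (j + 1)) = 0)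
    {s : Fin r} {j : ℕ} {α : Fin r → ℕ} (h : α s = j + 2) (h' : update α s (j + 1) s = j + 1)
    (x : ∀ k, E k (α k)) :
    PiTensorProduct.tprod R
      (diffCoords R E f s j (update α s (j + 1)) h' (diffCoords R E f s (j + 1) α h x)) = 0 := by
  apply MultilinearMap.map_coord_zero _ s
  simp only [diffCoords, dif_pos, castE_castE, castE_rfl]
  rw [← LinearMap.comp_apply, hf, LinearMap.zero_apply, map_zero]

lemma lof_tprod_diffCoords_comm {s t : Fin r} (hst : s ≠ t) {a b : ℕ} {α : Fin r → ℕ}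
    (ha : α s = a + 1) (hb : α t = b + 1)
    (hb' : update α s a t = b + 1) (ha' : update α t b s = a + 1) (x : ∀ k, E k (α k)) :
    DirectSum.lof R _ (fun β => T R E β) (update (update α s a) t b)
      (PiTensorProduct.tprod R
        (diffCoords R E f t b (update α s a) hb' (diffCoords R E f s a α ha x))) =
    DirectSum.lof R _ (fun β => T R E β) (update (update α t b) s a)
      (PiTensorProduct.tprod R
        (diffCoords R E f s a (update α t b) ha' (diffCoords R E f t b α hb x))) := by
  refine lof_tprod_congr (R := R) (E := E) (Function.update_comm hst a b α) fun k => ?_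
  rcases eq_or_ne k s with rfl | hks
  · simp [diffCoords, hst]
  rcases eq_or_ne k t with rfl | hkt
  · simp [diffCoords, hst.symm]
  · simp [diffCoords, hks, hkt]

end DiffCoords

lemma koszulSign_update_of_le {s t : Fin r} (h : t ≤ s) (α : Fin r → ℕ) (c : ℕ) :
    koszulSign t (update α s c) = koszulSign t α := by
  unfold koszulSign
  refine congrArg _ (Finset.sum_congr rfl fun k hk => Function.update_of_ne ?_ _ _)
  rintro rfl
  exact absurd h (not_le.2 (by simpa using hk))

lemma koszulSign_update_of_lt {s t : Fin r} (h : s < t) {α : Fin r → ℕ} {c : ℕ}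
    (hc : α s = c + 1) : koszulSign t (update α s c) = -koszulSign t α := by
  unfold koszulSign
  have hmem : s ∈ Finset.univ.filter (· < t) := by simp [h]
  rw [Finset.sum_update_of_mem hmem, Finset.sum_eq_sum_sdiff_singleton_add hmem, hc]
  ring

lemma koszulSign_mul_add_swap {s t : Fin r} (hst : s ≠ t) {α : Fin r → ℕ} {a b : ℕ}
    (ha : α s = a + 1) (hb : α t = b + 1) :
    koszulSign s α * koszulSign t (update α s a) +
      koszulSign t α * koszulSign s (update α t b) = 0 := by
  rcases lt_or_gt_of_ne hst with h | h
  · rw [koszulSign_update_of_lt h ha, koszulSign_update_of_le h.le]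
    ring
  · rw [koszulSign_update_of_le h.le, koszulSign_update_of_lt h hb]
    ring

noncomputable def koszulDiffComp (s : Fin r) (α : Fin r → ℕ) : T R E α →ₗ[R] G R E :=
  if h : 2 ≤ α s then
    DirectSum.lof R _ (fun β => T R E β) (update α s (α s - 1)) ∘ₗ
      (koszulSign s α • diffComp R E f s (α s - 1) α (by omega))
  else 0

noncomputable def koszulDiff (s : Fin r) : G R E →ₗ[R] G R E :=
  DirectSum.toModule R _ (G R E) (koszulDiffComp R E f s)

noncomputable def baseDiff : G R E →ₗ[R] G R E :=
  DirectSum.lof R _ (fun β => T R E β) (fun _ => 0) ∘ₗ PiTensorProduct.map (fun k => f k 0) ∘ₗ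
    DirectSum.component R _ (fun β => T R E β) (fun _ => 1)

section Differentials

variable {R E f}

lemma hGlobal_eq_baseDiff_add_sum_koszulDiff :
    hGlobal R E f = baseDiff R E f + ∑ s, koszulDiff R E f s := by
  refine DirectSum.linearMap_ext R fun α => LinearMap.ext fun y => ?_
  simp only [hGlobal, koszulDiff, baseDiff, LinearMap.add_apply, LinearMap.sum_apply,
    LinearMap.comp_apply, DirectSum.toModule_lof]
  by_cases hα : α = fun _ => 1
  · subst hα
    have hzero : ∀ s, koszulDiffComp R E f s (fun _ => 1) = 0 := fun s => dif_neg (by simp)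
    simp [hzero, hComp]
  · rw [DirectSum.component.of, dif_neg hα, map_zero, map_zero, zero_add, hComp, dif_neg hα]
    simp only [LinearMap.sum_apply, koszulDiffComp]

lemma koszulDiff_lof_of_lt {s : Fin r} {α : Fin r → ℕ} (h : α s < 2) (y : T R E α) :
    koszulDiff R E f s (DirectSum.lof R _ _ α y) = 0 := by
  rw [koszulDiff, DirectSum.toModule_lof, koszulDiffComp, dif_neg (by omega),
    LinearMap.zero_apply]

lemma koszulDiff_lof_tprod {s : Fin r} {α : Fin r → ℕ} {j : ℕ} (h : α s = j + 2)
    (x : ∀ k, E k (α k)) :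
    koszulDiff R E f s (DirectSum.lof R _ _ α (PiTensorProduct.tprod R x)) =
      koszulSign s α • DirectSum.lof R _ (fun β => T R E β) (update α s (j + 1))
        (PiTensorProduct.tprod R (diffCoords R E f s (j + 1) α h x)) := by
  rw [koszulDiff, DirectSum.toModule_lof, koszulDiffComp, dif_pos (by omega)]
  change DirectSum.lof R _ (fun β => T R E β) _
    (koszulSign s α • diffComp R E f s (α s - 1) α _ (PiTensorProduct.tprod R x)) = _
  rw [diffComp_tprod, map_zsmul, lof_tprod_diffCoords_congr s (by omega : α s - 1 = j + 1)]

lemma koszulDiff_comp_self (hf : ∀ k j, (f k j).comp (f k (j + 1)) = 0) (s : Fin r) :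
    koszulDiff R E f s ∘ₗ koszulDiff R E f s = 0 := by
  refine linearMap_ext_lof_tprod fun α x => ?_
  rw [LinearMap.comp_apply, LinearMap.zero_apply]
  rcases lt_or_ge (α s) 2 with hs | hs
  · rw [koszulDiff_lof_of_lt hs, map_zero]
  obtain ⟨j, hj⟩ := Nat.exists_eq_add_of_le' hs
  rw [koszulDiff_lof_tprod hj, map_zsmul]
  cases j with
  | zero => rw [koszulDiff_lof_of_lt (by simp), smul_zero]
  | succ i =>
    rw [koszulDiff_lof_tprod (by simp : update α s (i + 2) s = i + 2),
      tprod_diffCoords_diffCoords_self_eq_zero hf hj, map_zero, smul_zero, smul_zero]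

lemma koszulDiff_koszulDiff_lof_of_lt {s t : Fin r} (hst : s ≠ t) {α : Fin r → ℕ}
    (h : α s < 2) (x : ∀ k, E k (α k)) :
    koszulDiff R E f s (koszulDiff R E f t (DirectSum.lof R _ _ α (PiTensorProduct.tprod R x))) =
      0 := by
  rcases lt_or_ge (α t) 2 with ht | ht
  · rw [koszulDiff_lof_of_lt ht, map_zero]
  obtain ⟨b, hb⟩ := Nat.exists_eq_add_of_le' ht
  rw [koszulDiff_lof_tprod hb, map_zsmul,
    koszulDiff_lof_of_lt (by rwa [Function.update_of_ne hst]), smul_zero]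

lemma koszulDiff_comp_add_comp {s t : Fin r} (hst : s ≠ t) :
    koszulDiff R E f t ∘ₗ koszulDiff R E f s + koszulDiff R E f s ∘ₗ koszulDiff R E f t = 0 := by
  refine linearMap_ext_lof_tprod fun α x => ?_
  rw [LinearMap.add_apply, LinearMap.comp_apply, LinearMap.comp_apply, LinearMap.zero_apply]
  rcases lt_or_ge (α s) 2 with hs | hs
  · rw [koszulDiff_lof_of_lt hs, map_zero, zero_add, koszulDiff_koszulDiff_lof_of_lt hst hs]
  rcases lt_or_ge (α t) 2 with ht | ht
  · rw [koszulDiff_lof_of_lt ht, map_zero, add_zero,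
      koszulDiff_koszulDiff_lof_of_lt (Ne.symm hst) ht]
  obtain ⟨a, ha⟩ := Nat.exists_eq_add_of_le' hs
  obtain ⟨b, hb⟩ := Nat.exists_eq_add_of_le' ht
  have hb' : update α s (a + 1) t = b + 2 := by rw [Function.update_of_ne (Ne.symm hst), hb]
  have ha' : update α t (b + 1) s = a + 2 := by rw [Function.update_of_ne hst, ha]
  rw [koszulDiff_lof_tprod ha, map_zsmul, koszulDiff_lof_tprod hb', smul_smul,
    koszulDiff_lof_tprod hb, map_zsmul, koszulDiff_lof_tprod ha', smul_smul,
    lof_tprod_diffCoords_comm hst ha hb hb' ha', ← add_smul, koszulSign_mul_add_swap hst ha hb,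
    zero_smul]

lemma baseDiff_comp_koszulDiff (hf : ∀ k j, (f k j).comp (f k (j + 1)) = 0) (s : Fin r) :
    baseDiff R E f ∘ₗ koszulDiff R E f s = 0 := by
  refine linearMap_ext_lof_tprod fun α x => ?_
  rw [LinearMap.comp_apply, LinearMap.zero_apply]
  rcases lt_or_ge (α s) 2 with hs | hs
  · rw [koszulDiff_lof_of_lt hs, map_zero]
  obtain ⟨j, hj⟩ := Nat.exists_eq_add_of_le' hs
  rw [koszulDiff_lof_tprod hj, map_zsmul, baseDiff, LinearMap.comp_apply, LinearMap.comp_apply]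
  by_cases hone : update α s (j + 1) = fun _ => 1
  · obtain rfl : j = 0 := by simpa using congrFun hone s
    rw [lof_tprod_congr hone fun _ => rfl, DirectSum.component.lof_self,
      PiTensorProduct.map_tprod, MultilinearMap.map_coord_zero _ s, map_zero, smul_zero]
    simp only [diffCoords, dif_pos, castE_castE, castE_rfl]
    rw [← LinearMap.comp_apply, hf, LinearMap.zero_apply]
  · rw [DirectSum.component.of, dif_neg hone, map_zero, map_zero, smul_zero]

lemma hGlobal_comp_hGlobal (hf : ∀ k j, (f k j).comp (f k (j + 1)) = 0) :
    hGlobal R E f ∘ₗ hGlobal R E f = hGlobal R E f ∘ₗ baseDiff R E f := by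
  have hsplit := hGlobal_eq_baseDiff_add_sum_koszulDiff (R := R) (E := E) (f := f)
  have hDD : (∑ s, koszulDiff R E f s) * ∑ s, koszulDiff R E f s = 0 :=
    sum_mul_sum_self_eq_zero _ _ (fun s _ => koszulDiff_comp_self hf s)
      fun s _ t _ hst => koszulDiff_comp_add_comp (Ne.symm hst)
  have hbD : baseDiff R E f * ∑ s, koszulDiff R E f s = 0 := by
    rw [Finset.mul_sum]
    exact Finset.sum_eq_zero fun s _ => baseDiff_comp_koszulDiff hf s
  change hGlobal R E f * hGlobal R E f = hGlobal R E f * baseDiff R E f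
  calc hGlobal R E f * hGlobal R E f
      = hGlobal R E f * (baseDiff R E f + ∑ s, koszulDiff R E f s) := by rw [← hsplit]
    _ = hGlobal R E f * baseDiff R E f +
          (baseDiff R E f + ∑ s, koszulDiff R E f s) * ∑ s, koszulDiff R E f s := by
        rw [mul_add, hsplit]
    _ = hGlobal R E f * baseDiff R E f := by rw [add_mul, hbD, hDD, add_zero, add_zero]

end Differentials

section Truncation

variable {R E f}

lemma ne_one_of_adm {k : ℕ} {β : Fin r → ℕ} (h : Adm (k + 1 + 1) β) : β ≠ fun _ => 1 := by
  rintro rfl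
  simpa using h.2

lemma adm_update_of_adm {k : ℕ} {β : Fin r → ℕ} (h : Adm (k + 1 + 1) β) {s : Fin r}
    (hs : 2 ≤ β s) : Adm (k + 1) (update β s (β s - 1)) := by
  refine ⟨fun i => ?_, ?_⟩
  · rcases eq_or_ne i s with rfl | hi
    · rw [Function.update_self]; omega
    · rw [Function.update_of_ne hi]; exact h.1 i
  · have hsum := Finset.sum_eq_sum_sdiff_singleton_add (Finset.mem_univ s) β
    rw [Finset.sum_update_of_mem (Finset.mem_univ s)]
    have := h.2
    omega

lemma incl_lof {k : ℕ} (β : {β : Fin r → ℕ // Adm k β}) (y : T R E β.1) :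
    incl R E k (DirectSum.lof R _ (fun β : {β : Fin r → ℕ // Adm k β} => T R E β.1) β y) =
      DirectSum.lof R _ (fun γ => T R E γ) β.1 y :=
  DirectSum.toModule_lof R _ _

lemma incl_proj_lof {k : ℕ} {γ : Fin r → ℕ} (h : Adm k γ) (y : T R E γ) :
    incl R E k (proj R E k (DirectSum.lof R _ (fun β => T R E β) γ y)) =
      DirectSum.lof R _ (fun β => T R E β) γ y := by
  rw [proj, DirectSum.toModule_lof, dif_pos h, incl_lof]

lemma baseDiff_comp_incl (k : ℕ) : baseDiff R E f ∘ₗ incl R E (k + 1 + 1) = 0 := by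
  refine DirectSum.linearMap_ext R fun β => LinearMap.ext fun y => ?_
  rw [LinearMap.comp_apply, LinearMap.comp_apply, incl_lof, baseDiff, LinearMap.comp_apply,
    LinearMap.comp_apply, DirectSum.component.of, dif_neg (ne_one_of_adm β.2), map_zero,
    map_zero, LinearMap.zero_comp, LinearMap.zero_apply]

lemma incl_proj_comp_koszulDiff_comp_incl (k : ℕ) (s : Fin r) :
    incl R E (k + 1) ∘ₗ proj R E (k + 1) ∘ₗ koszulDiff R E f s ∘ₗ incl R E (k + 1 + 1) =
      koszulDiff R E f s ∘ₗ incl R E (k + 1 + 1) := by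
  refine DirectSum.linearMap_ext R fun β => LinearMap.ext fun y => ?_
  simp only [LinearMap.comp_apply, incl_lof, koszulDiff, DirectSum.toModule_lof, koszulDiffComp]
  split_ifs with hs
  · exact incl_proj_lof (adm_update_of_adm β.2 hs) _
  · simp only [LinearMap.zero_apply, map_zero]

lemma incl_proj_comp_hGlobal_comp_incl (k : ℕ) :
    incl R E (k + 1) ∘ₗ proj R E (k + 1) ∘ₗ hGlobal R E f ∘ₗ incl R E (k + 1 + 1) =
      hGlobal R E f ∘ₗ incl R E (k + 1 + 1) := by
  refine LinearMap.ext fun y => ?_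
  have hbase := LinearMap.congr_fun (baseDiff_comp_incl (f := f) k) y
  have hδ s := LinearMap.congr_fun (incl_proj_comp_koszulDiff_comp_incl (f := f) k s) y
  simp only [LinearMap.comp_apply, LinearMap.zero_apply] at hbase hδ
  simp only [LinearMap.comp_apply, hGlobal_eq_baseDiff_add_sum_koszulDiff, LinearMap.add_apply,
    hbase, zero_add, LinearMap.sum_apply, map_sum, hδ]

end Truncation

/-- The diamond product `(H, h) = E¹ ⋄ ⋯ ⋄ Eʳ` of complexes of modules is itself a
complex: `h_k ∘ h_{k+1} = 0` for all `k ≥ 1`. -/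
theorem diamond_is_complex (hf : ∀ k j, (f k j).comp (f k (j + 1)) = 0) (k : ℕ) :
    hMap R E f k ∘ₗ hMap R E f (k + 1) = 0 := by
  calc hMap R E f k ∘ₗ hMap R E f (k + 1)
      = proj R E k ∘ₗ hGlobal R E f ∘ₗ (incl R E (k + 1) ∘ₗ proj R E (k + 1) ∘ₗ
          hGlobal R E f ∘ₗ incl R E (k + 1 + 1)) := rfl
    _ = proj R E k ∘ₗ (hGlobal R E f ∘ₗ hGlobal R E f) ∘ₗ incl R E (k + 1 + 1) := by
        rw [incl_proj_comp_hGlobal_comp_incl]; rfl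
    _ = proj R E k ∘ₗ hGlobal R E f ∘ₗ baseDiff R E f ∘ₗ incl R E (k + 1 + 1) := by
        rw [hGlobal_comp_hGlobal hf]; rfl
    _ = 0 := by rw [baseDiff_comp_incl, LinearMap.comp_zero, LinearMap.comp_zero]

end Diamond
end
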